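/- Let H = C[N] be the polynomial functions on the nilpotent cone N of sl₂(C), identified with the graded algebra ⊕_{t≥0} V(2t) where V(2t) sits in degree t and is the irreducible SL₂-representation of dimension 2t+1. Consider the graded commutative algebra A = (C[N] ⊗ Z) / (C[N]_+ ⊗ span(x_i + y_i, e_St : i)) where Z = ∏_i C[x_i,y_i]/(x_i²,x_iy_i,y_i²) × C·e_St is the center of u_q(sl₂) and C[N]_+ is the augmentation ideal. Then the degree-0 part of A is Z, and for each degree t ≥ 1 the graded piece of the i-th regular block factor of A has dimension (2t+1)·2 (spanned by C^t[N]·e_i and the image of C^t[N]·x_i ≅ C^t[N]·(−y_i)). -/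

import Mathlib

/-!
The block `ℂ[x,y]/(x², xy, y²)` is the algebra of first-order jets at the origin of the plane:
evaluating `x, y` at the two square-zero directions of `ℂ ⊕ ℂ²` shows that `1, x, y` are
linearly independent, and they span because every product of two of `x, y` vanishes. Hence the
block is 3-dimensional and `x + y ≠ 0`. Tensoring with `V(2t)` over a field is exact, so the
quotient of `V(2t) ⊗ block` by `V(2t) ⊗ ℂ(x + y)` has dimension `(2t + 1)(3 - 1)`.
-/

open MvPolynomial TensorProduct

/-- One regular-block factor `ℂ[x,y]/(x², xy, y²)` of the center `Z` of `u_q(sl₂)`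
(Kerler's presentation). -/
noncomputable abbrev blockZ : Type :=
  MvPolynomial (Fin 2) ℂ ⧸
    (Ideal.span {(X 0 : MvPolynomial (Fin 2) ℂ) ^ 2, X 0 * X 1, X 1 ^ 2})

noncomputable def xA : blockZ :=
  Ideal.Quotient.mk _ (X 0 : MvPolynomial (Fin 2) ℂ)
noncomputable def yA : blockZ :=
  Ideal.Quotient.mk _ (X 1 : MvPolynomial (Fin 2) ℂ)

theorem finrank_quotient_range_map_id_subtype {K V W : Type*} [Field K] [AddCommGroup V]
    [Module K V] [FiniteDimensional K V] [AddCommGroup W] [Module K W] [FiniteDimensional K W]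
    (S : Submodule K W) :
    Module.finrank K ((V ⊗[K] W) ⧸
        LinearMap.range (TensorProduct.map (LinearMap.id : V →ₗ[K] V) S.subtype)) =
      Module.finrank K V * (Module.finrank K W - Module.finrank K S) := by
  set f := TensorProduct.map (LinearMap.id : V →ₗ[K] V) S.subtype
  have hinj : Function.Injective f :=
    Module.Flat.lTensor_preserves_injective_linearMap S.subtype S.injective_subtype
  have h := Submodule.finrank_quotient_add_finrank (LinearMap.range f)
  rw [LinearMap.finrank_range_of_inj hinj, Module.finrank_tensorProduct,
    Module.finrank_tensorProduct] at h
  rw [Nat.mul_sub]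
  exact Nat.eq_sub_of_add_eq h

theorem xA_mul_xA : xA * xA = 0 := by
  rw [xA, ← map_mul, Ideal.Quotient.eq_zero_iff_mem]
  exact Ideal.subset_span (by simp [sq])

theorem xA_mul_yA : xA * yA = 0 := by
  rw [xA, yA, ← map_mul, Ideal.Quotient.eq_zero_iff_mem]
  exact Ideal.subset_span (by simp)

theorem yA_mul_yA : yA * yA = 0 := by
  rw [yA, ← map_mul, Ideal.Quotient.eq_zero_iff_mem]
  exact Ideal.subset_span (by simp [sq])

theorem span_range_one_xA_yA_eq_top : Submodule.span ℂ (Set.range ![1, xA, yA]) = ⊤ := by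
  set P := Submodule.span ℂ (Set.range ![1, xA, yA])
  have h1 : (1 : blockZ) ∈ P := Submodule.subset_span ⟨0, rfl⟩
  have hxA : xA ∈ P := Submodule.subset_span ⟨1, rfl⟩
  have hyA : yA ∈ P := Submodule.subset_span ⟨2, rfl⟩
  have hmul : P * P ≤ P := by
    rw [Submodule.span_mul_span, Submodule.span_le, Set.mul_subset_iff]
    rintro _ ⟨i, rfl⟩ _ ⟨j, rfl⟩
    fin_cases i <;> fin_cases j <;>
      simp [xA_mul_xA, xA_mul_yA, yA_mul_yA, mul_comm yA xA, h1, hxA, hyA]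
  refine Submodule.eq_top_iff'.2 fun z => ?_
  obtain ⟨p, rfl⟩ := Ideal.Quotient.mk_surjective z
  induction p using MvPolynomial.induction_on with
  | C a =>
    rw [← MvPolynomial.algebraMap_eq, Ideal.Quotient.mk_algebraMap,
      Algebra.algebraMap_eq_smul_one]
    exact P.smul_mem a h1
  | add p q hp hq => rw [map_add]; exact P.add_mem hp hq
  | mul_X p i hp =>
    rw [map_mul]
    refine Submodule.mul_le.1 hmul _ hp _ ?_
    fin_cases i
    exacts [hxA, hyA]

noncomputable def blockZJet : blockZ →ₐ[ℂ] TrivSqZeroExt ℂ (ℂ × ℂ) :=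
  Ideal.Quotient.liftₐ _ (aeval ![TrivSqZeroExt.inr (1, 0), TrivSqZeroExt.inr (0, 1)])
    fun p hp => by
      refine RingHom.mem_ker.1 (Ideal.span_le.2 ?_ hp)
      rintro _ (rfl | rfl | rfl) <;> simp [sq, TrivSqZeroExt.inr_mul_inr]

theorem blockZJet_xA : blockZJet xA = TrivSqZeroExt.inr (1, 0) :=
  aeval_X _ 0

theorem blockZJet_yA : blockZJet yA = TrivSqZeroExt.inr (0, 1) :=
  aeval_X _ 1

theorem linearIndependent_one_xA_yA : LinearIndependent ℂ ![1, xA, yA] := by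
  rw [Fintype.linearIndependent_iff]
  intro g hg
  simpa [Fin.forall_fin_succ, Fin.sum_univ_three, blockZJet_xA, blockZJet_yA,
    TrivSqZeroExt.ext_iff] using congrArg blockZJet hg

noncomputable def blockZBasis : Module.Basis (Fin 3) ℂ blockZ :=
  .mk linearIndependent_one_xA_yA span_range_one_xA_yA_eq_top.ge

instance : FiniteDimensional ℂ blockZ := .of_basis blockZBasis

theorem finrank_blockZ : Module.finrank ℂ blockZ = 3 := by
  rw [Module.finrank_eq_card_basis blockZBasis, Fintype.card_fin]

theorem xA_add_yA_ne_zero : xA + yA ≠ 0 := fun h => by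
  simpa [blockZJet_xA, blockZJet_yA, TrivSqZeroExt.ext_iff] using congrArg blockZJet h

theorem stmt_16 (t : ℕ) :
    Module.finrank ℂ blockZ = 3 ∧
    Module.finrank ℂ
      (((Fin (2 * t + 1) → ℂ) ⊗[ℂ] blockZ) ⧸
        LinearMap.range
          (TensorProduct.map (LinearMap.id : (Fin (2 * t + 1) → ℂ) →ₗ[ℂ] _)
            (Submodule.span ℂ ({xA + yA} : Set blockZ)).subtype))
      = (2 * t + 1) * 2 := by
  refine ⟨finrank_blockZ, ?_⟩
  rw [finrank_quotient_range_map_id_subtype, finrank_blockZ,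
    finrank_span_singleton xA_add_yA_ne_zero, Module.finrank_fin_fun]
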